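/- Let Γ be a finite group with |Γ| ≥ 2, generated by a finite symmetric set S = S⁻¹ ⊆ Γ. Then the Cheeger constant satisfies h_S(Γ) ≥ sup_{r ∈ ℕ, r ≥ 1} (1/r)·(1 − |Γ|/(2·γ_S(r))), i.e. h_S(Γ) ≥ U_{ℕ,γ_S}(|Γ|/2). -/

import Mathlib

open scoped Pointwise

variable {G : Type*} [Group G] [DecidableEq G]

/-- The ball of radius `r` in the word metric: elements of `G` expressible as
a product of at most `r` elements of `S`. -/
def wordBall (S : Finset G) : ℕ → Finset G
  | 0 => {1}
  | r + 1 => wordBall S r ∪ S * wordBall S r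

/-- The inner boundary of a finite set `D` with respect to the generating set `S`. -/
def innerBoundary (S D : Finset G) : Finset G :=
  D.filter fun x => ∃ s ∈ S, s * x ∉ D


/-- The edge boundary of `D`: unordered pairs `{x, y}` with `x ∈ D`, `y ∉ D` and
`y = s·x` for some `s ∈ S`. -/
def edgeBoundary [Fintype G] (S D : Finset G) : Finset (Sym2 G) :=
  ((D ×ˢ Dᶜ).filter fun p => ∃ s ∈ S, p.2 = s * p.1).image fun p => Sym2.mk p.1 p.2

/-- The Cheeger constant of a finite group `G` with respect to `S`. -/
noncomputable def cheeger [Fintype G] (S : Finset G) : ℝ :=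
  sInf {x : ℝ | ∃ D : Finset G, 0 < D.card ∧ 2 * D.card ≤ Fintype.card G ∧
    x = ((edgeBoundary S D).card : ℝ) / (D.card : ℝ)}

/-!
If `g` lies in the ball of radius `r`, then `|gD \ D| ≤ r·|∂D|`: a single generator moves at most
`|∂D|` points of `D` out of `D`, and `g ↦ |gD \ D|` is subadditive. Since `|D ∩ gD| = |D| - |gD \ D|`
and `∑_g |D ∩ gD| = |D|²`, summing over the ball gives `|B(r)|·|D| ≤ |D|² + |B(r)|·r·|∂D|`, which
rearranges to the bound once `|D| ≤ |G|/2`.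
-/

open Finset

lemma one_div_mul_one_sub_div_le_div {n b d e r : ℝ} (hr : 0 < r) (hb : 0 < b) (hd : 0 < d)
    (hdn : 2 * d ≤ n) (h : b * d ≤ d * d + b * (r * e)) :
    1 / r * (1 - n / (2 * b)) ≤ e / d := by
  have hn : d / b ≤ n / (2 * b) := by
    rw [div_le_div_iff₀ hb (by positivity)]
    nlinarith
  have hdb : 1 - d / b ≤ r * e / d := by
    rw [one_sub_div hb.ne', div_le_div_iff₀ hb hd]
    nlinarith
  calc 1 / r * (1 - n / (2 * b)) ≤ 1 / r * (r * e / d) := by gcongr; linarith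
    _ = e / d := by field_simp

lemma one_mem_wordBall (S : Finset G) : ∀ r, (1 : G) ∈ wordBall S r
  | 0 => by simp [wordBall]
  | r + 1 => by simp [wordBall, one_mem_wordBall S r]

lemma card_mul_smul_sdiff_le (D : Finset G) (g h : G) :
    #(((g * h) • D) \ D) ≤ #((g • D) \ D) + #((h • D) \ D) :=
  calc #(((g * h) • D) \ D)
      ≤ #(((g * h) • D) \ (g • D) ∪ (g • D) \ D) := card_le_card (sdiff_triangle _ _ _)
    _ ≤ #(((g * h) • D) \ (g • D)) + #((g • D) \ D) := card_union_le _ _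
    _ = #((g • D) \ D) + #((h • D) \ D) := by
      rw [mul_smul, ← smul_finset_sdiff, card_smul_finset, add_comm]

section

variable [Fintype G]

lemma sum_card_inter_smul (D : Finset G) :
    ∑ g : G, #(D ∩ g • D) = #D * #D := by
  have hfiber : ∀ g, #(D ∩ g • D) = #{p ∈ D ×ˢ D | p.1 * p.2⁻¹ = g} := fun g => by
    rw [card_inter_smul, card_mul_inv_eq_convolution_inv]
  simp_rw [hfiber, ← card_product]
  exact (card_eq_sum_card_fiberwise fun _ _ => mem_univ _).symm

lemma card_smul_sdiff_le_card_edgeBoundary (S D : Finset G) {s : G} (hs : s ∈ S) :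
    #((s • D) \ D) ≤ #(edgeBoundary S D) := by
  refine card_le_card_of_injOn (fun y => Sym2.mk (s⁻¹ * y) y) ?_ ?_
  · intro y hy
    obtain ⟨hyD, hy⟩ := mem_sdiff.1 hy
    have hx : s⁻¹ * y ∈ D := inv_smul_mem_iff.2 hyD
    exact mem_image.2 ⟨(s⁻¹ * y, y), mem_filter.2 ⟨mem_product.2 ⟨hx, mem_compl.2 hy⟩,
      s, hs, by group⟩, rfl⟩
  · intro y hy y' hy' hyy'
    rcases Sym2.eq_iff.1 hyy' with ⟨-, h⟩ | ⟨h, -⟩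
    · exact h
    · exact absurd (h ▸ inv_smul_mem_iff.2 (mem_sdiff.1 hy).1) (mem_sdiff.1 hy').2

lemma card_smul_sdiff_le_of_mem_wordBall (S D : Finset G) :
    ∀ r, ∀ g ∈ wordBall S r, #((g • D) \ D) ≤ r * #(edgeBoundary S D)
  | 0, g, hg => by simp_all [wordBall]
  | r + 1, g, hg => by
    rcases mem_union.1 hg with hg | hg
    · exact (card_smul_sdiff_le_of_mem_wordBall S D r g hg).trans (by gcongr; omega)
    · obtain ⟨s, hs, h, hh, rfl⟩ := mem_mul.1 hg
      have hh := card_smul_sdiff_le_of_mem_wordBall S D r h hh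
      have hs := card_smul_sdiff_le_card_edgeBoundary S D hs
      have hsh := card_mul_smul_sdiff_le D s h
      rw [add_mul, one_mul]
      omega

lemma card_wordBall_mul_card_le (S D : Finset G) (r : ℕ) :
    #(wordBall S r) * #D ≤ #D * #D + #(wordBall S r) * (r * #(edgeBoundary S D)) := by
  have hterm : ∀ g ∈ wordBall S r, #D ≤ #(D ∩ g • D) + r * #(edgeBoundary S D) := by
    intro g hg
    have hsplit := card_sdiff_add_card_inter (g • D) D
    rw [card_smul_finset, inter_comm] at hsplit
    have hmoved := card_smul_sdiff_le_of_mem_wordBall S D r g hg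
    omega
  calc #(wordBall S r) * #D
      ≤ ∑ g ∈ wordBall S r, (#(D ∩ g • D) + r * #(edgeBoundary S D)) := by
        simpa using sum_le_sum hterm
    _ ≤ ∑ g : G, #(D ∩ g • D) + #(wordBall S r) * (r * #(edgeBoundary S D)) := by
        rw [sum_add_distrib, sum_const, smul_eq_mul]
        gcongr
        exact subset_univ _
    _ = #D * #D + #(wordBall S r) * (r * #(edgeBoundary S D)) := by rw [sum_card_inter_smul]

lemma one_div_mul_one_sub_le_card_edgeBoundary_div (S D : Finset G) {r : ℕ} (hr : 1 ≤ r)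
    (hD : 0 < #D) (hDG : 2 * #D ≤ Fintype.card G) :
    1 / (r : ℝ) * (1 - (Fintype.card G : ℝ) / (2 * #(wordBall S r)))
      ≤ #(edgeBoundary S D) / #D := by
  have hB : 0 < #(wordBall S r) := card_pos.2 ⟨1, one_mem_wordBall S r⟩
  exact one_div_mul_one_sub_div_le_div (by exact_mod_cast hr) (by exact_mod_cast hB)
    (by exact_mod_cast hD) (by exact_mod_cast hDG)
    (by exact_mod_cast card_wordBall_mul_card_le S D r)

end

theorem stmt3_general [Fintype G] (S : Finset G)
    (hcard : 2 ≤ Fintype.card G) :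
    (⨆ r : {r : ℕ // 1 ≤ r},
        (1 / ((r : ℕ) : ℝ)) *
          (1 - (Fintype.card G : ℝ) / (2 * ((wordBall S (r : ℕ)).card : ℝ))))
      ≤ cheeger S := by
  have : Nonempty {r : ℕ // 1 ≤ r} := ⟨⟨1, le_rfl⟩⟩
  refine ciSup_le fun ⟨r, hr⟩ => le_csInf ?_ ?_
  · exact ⟨_, {1}, by simp, by simpa using hcard, rfl⟩
  · rintro _ ⟨D, hD, hDG, rfl⟩
    exact one_div_mul_one_sub_le_card_edgeBoundary_div S D hr hD hDG

theorem stmt3 [Fintype G] (S : Finset G)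
    (hsymm : ∀ s ∈ S, s⁻¹ ∈ S) (hgen : Subgroup.closure (S : Set G) = ⊤)
    (hcard : 2 ≤ Fintype.card G) :
    (⨆ r : {r : ℕ // 1 ≤ r},
        (1 / ((r : ℕ) : ℝ)) *
          (1 - (Fintype.card G : ℝ) / (2 * ((wordBall S (r : ℕ)).card : ℝ))))
      ≤ cheeger S :=
  stmt3_general S hcard
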